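/- For every real unit vector ψ = (x₁, x₂, x₃, x₄) ∈ ℝ⁴, the concurrence of the pure-state density matrix ψψᵀ equals |ψᵀ J ψ| = 2|x₂x₃ − x₁x₄|. -/

import Mathlib

open Matrix Polynomial

noncomputable section

/-- `J = σ_y ⊗ σ_y` as a complex 4×4 matrix (standard product basis). -/
def Jc : Matrix (Fin 4) (Fin 4) ℂ :=
  !![0, 0, 0, -1; 0, 0, 1, 0; 0, 1, 0, 0; -1, 0, 0, 0]

/-- `J = σ_y ⊗ σ_y` as a real 4×4 matrix (standard product basis). -/
def Jr : Matrix (Fin 4) (Fin 4) ℝ :=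
  !![0, 0, 0, -1; 0, 0, 1, 0; 0, 1, 0, 0; -1, 0, 0, 0]

/-- The spin-flipped matrix `ρ̃ = J ρ̄ J`. -/
def spinFlip (ρ : Matrix (Fin 4) (Fin 4) ℂ) : Matrix (Fin 4) (Fin 4) ℂ :=
  Jc * ρ.map (starRingEnd ℂ) * Jc

/-- The concurrence of a two-qubit density matrix `ρ`:
`max (0, √μ₁ − √μ₂ − √μ₃ − √μ₄)` where `μ₁ ≥ μ₂ ≥ μ₃ ≥ μ₄` are the (real,
nonnegative) eigenvalues of `ρ ρ̃` listed with multiplicity. -/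
def concurrence (ρ : Matrix (Fin 4) (Fin 4) ℂ) : ℝ :=
  let l : List ℝ :=
    (((ρ * spinFlip ρ).charpoly.roots.map Complex.re).sort (· ≤ ·))
  max 0 (Real.sqrt (l.getD 3 0) - Real.sqrt (l.getD 2 0) -
    Real.sqrt (l.getD 1 0) - Real.sqrt (l.getD 0 0))

/-- The (complex) density matrix of the pure state given by a real 4-vector `ψ`,
namely `ψ ψᵀ`. -/
def pureState (ψ : Fin 4 → ℝ) : Matrix (Fin 4) (Fin 4) ℂ :=
  (Matrix.vecMulVec ψ ψ).map Complex.ofReal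

end

/-! Since `ψ` is real, `ρ = ψψᵀ` is fixed by complex conjugation and `J` is symmetric, so the
spin flip is again a pure state, `ρ̃ = (Jψ)(Jψ)ᵀ`. Hence `ρρ̃ = (ψᵀJψ) ψ(Jψ)ᵀ` has rank one: its
eigenvalues are `0, 0, 0` and its trace `(ψᵀJψ)²`, and the concurrence is `√((ψᵀJψ)²) = |ψᵀJψ|`. -/

namespace Polynomial

variable {R : Type*} [CommRing R] [IsDomain R]

theorem roots_X_pow_succ_sub_smul_X_pow (n : ℕ) (c : R) :
    (X ^ (n + 1) - c • X ^ n : R[X]).roots = c ::ₘ Multiset.replicate n 0 := by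
  have hfactor : (X ^ (n + 1) - c • X ^ n : R[X]) = X ^ n * (X - C c) := by
    rw [smul_eq_C_mul]; ring
  rw [hfactor, roots_mul (mul_ne_zero (pow_ne_zero _ X_ne_zero) (X_sub_C_ne_zero c)),
    roots_X_pow, roots_X_sub_C, Multiset.nsmul_singleton, add_comm, Multiset.singleton_add]

end Polynomial

namespace Matrix

theorem roots_charpoly_vecMulVec {n R : Type*} [Fintype n] [DecidableEq n] [Nonempty n]
    [CommRing R] [IsDomain R] (u v : n → R) :
    (vecMulVec u v).charpoly.roots = (u ⬝ᵥ v) ::ₘ Multiset.replicate (Fintype.card n - 1) 0 := by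
  rw [charpoly_vecMulVec, ← Nat.sub_add_cancel (Fintype.card_pos (α := n)),
    Nat.add_sub_cancel, roots_X_pow_succ_sub_smul_X_pow]

theorem map_ofReal_mul {l m n : Type*} [Fintype m] (A : Matrix l m ℝ) (B : Matrix m n ℝ) :
    (A * B).map Complex.ofReal = A.map Complex.ofReal * B.map Complex.ofReal :=
  Matrix.map_mul (f := Complex.ofRealHom)

theorem map_ofReal_vecMulVec {m n : Type*} (u : m → ℝ) (v : n → ℝ) :
    (vecMulVec u v).map Complex.ofReal = vecMulVec (Complex.ofReal ∘ u) (Complex.ofReal ∘ v) := by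
  ext i j
  simp [vecMulVec_apply]

theorem ofReal_dotProduct {n : Type*} [Fintype n] (u v : n → ℝ) :
    ((u ⬝ᵥ v : ℝ) : ℂ) = (Complex.ofReal ∘ u) ⬝ᵥ (Complex.ofReal ∘ v) :=
  RingHom.map_dotProduct Complex.ofRealHom u v

end Matrix

theorem Multiset.sort_cons_replicate {α : Type*} [LinearOrder α] {a t : α} (hat : a ≤ t)
    (m : ℕ) : (t ::ₘ replicate m a).sort (· ≤ ·) = List.replicate m a ++ [t] := by
  induction m with
  | zero => simp
  | succ m ih =>
    rw [replicate_succ, cons_swap, sort_cons, ih, List.replicate_succ, List.cons_append]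
    intro b hb
    rcases mem_cons.1 hb with rfl | hb
    exacts [hat, (eq_of_mem_replicate hb).ge]

theorem concurrence_eq_sqrt_of_roots (ρ : Matrix (Fin 4) (Fin 4) ℂ) {t : ℝ} (ht : 0 ≤ t)
    (hroots : (ρ * spinFlip ρ).charpoly.roots.map Complex.re = t ::ₘ Multiset.replicate 3 0) :
    concurrence ρ = √t := by
  simp only [concurrence, hroots, Multiset.sort_cons_replicate ht]
  simp

theorem Jr_transpose : Jrᵀ = Jr := by
  ext i j; fin_cases i <;> fin_cases j <;> rfl

theorem Jc_eq_map_Jr : Jc = Jr.map Complex.ofReal := by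
  ext i j; fin_cases i <;> fin_cases j <;> simp [Jc, Jr]

theorem spinFlip_map_ofReal (A : Matrix (Fin 4) (Fin 4) ℝ) :
    spinFlip (A.map Complex.ofReal) = (Jr * A * Jr).map Complex.ofReal := by
  have hconj : (A.map Complex.ofReal).map (starRingEnd ℂ) = A.map Complex.ofReal := by
    ext i j; simp
  rw [spinFlip, hconj, Jc_eq_map_Jr, map_ofReal_mul, map_ofReal_mul]

theorem spinFlip_pureState (ψ : Fin 4 → ℝ) : spinFlip (pureState ψ) = pureState (Jr *ᵥ ψ) := by
  rw [pureState, spinFlip_map_ofReal, mul_vecMulVec, vecMulVec_mul, ← Jr_transpose,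
    vecMul_transpose, Jr_transpose, pureState]

theorem pureState_mul_pureState (ψ φ : Fin 4 → ℝ) :
    pureState ψ * pureState φ = (vecMulVec ψ ((ψ ⬝ᵥ φ) • φ)).map Complex.ofReal := by
  rw [pureState, pureState, ← map_ofReal_mul, vecMulVec_mul_vecMulVec]

theorem roots_charpoly_pureState_mul_spinFlip (ψ : Fin 4 → ℝ) :
    (pureState ψ * spinFlip (pureState ψ)).charpoly.roots.map Complex.re =
      (ψ ⬝ᵥ Jr *ᵥ ψ) ^ 2 ::ₘ Multiset.replicate 3 0 := by
  rw [spinFlip_pureState, pureState_mul_pureState, map_ofReal_vecMulVec, roots_charpoly_vecMulVec,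
    ← ofReal_dotProduct, dotProduct_smul, smul_eq_mul]
  simp [sq]

theorem dotProduct_Jr_mulVec (ψ : Fin 4 → ℝ) :
    ψ ⬝ᵥ Jr *ᵥ ψ = 2 * (ψ 1 * ψ 2 - ψ 0 * ψ 3) := by
  simp only [dotProduct, mulVec, Jr, Fin.sum_univ_four, of_apply, cons_val', cons_val_fin_one,
    cons_val_zero, cons_val_one, cons_val]
  ring

theorem concurrence_pureState_general (ψ : Fin 4 → ℝ) :
    concurrence (pureState ψ) = |ψ ⬝ᵥ (Jr *ᵥ ψ)| ∧
      |ψ ⬝ᵥ (Jr *ᵥ ψ)| = 2 * |ψ 1 * ψ 2 - ψ 0 * ψ 3| := by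
  constructor
  · rw [concurrence_eq_sqrt_of_roots _ (sq_nonneg _) (roots_charpoly_pureState_mul_spinFlip ψ),
      Real.sqrt_sq_eq_abs]
  · rw [dotProduct_Jr_mulVec, abs_mul, abs_two]

/-- For a real two-qubit pure state `ψ`, the concurrence of `ψψᵀ` equals
`|ψᵀ J ψ| = 2|x₂x₃ − x₁x₄|`. -/
theorem concurrence_pureState (ψ : Fin 4 → ℝ) (hψ : ∑ i, ψ i ^ 2 = 1) :
    concurrence (pureState ψ) = |ψ ⬝ᵥ (Jr *ᵥ ψ)| ∧
      |ψ ⬝ᵥ (Jr *ᵥ ψ)| = 2 * |ψ 1 * ψ 2 - ψ 0 * ψ 3| :=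
  concurrence_pureState_general ψ
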